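/- Let E be an acyclic directed graph and let C be an infinite chain in the set E(G(E)) of idempotents of G(E) with respect to the natural partial order (e ≤ f iff e = ef = fe). Then there exists a sequence of paths (u_n) in Path(E) such that u₀ is a vertex, for each n there is an edge x_n with u_{n+1} = u_n x_n, and C ⊆ {u_n u_n⁻¹ : n ∈ ω} ∪ {0}. -/
import Mathlib


/-! Preamble: graph inverse semigroups and compactness-type properties. -/

namespace GISPaper

variable {V E : Type*}

/-- `IsPathFrom src rng v l` means that the list of edges `l` is composable
and starts at the vertex `v`. -/
def IsPathFrom (src rng : E → V) : V → List E → Prop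
  | _, [] => True
  | v, e :: l => src e = v ∧ IsPathFrom src rng (rng e) l

/-- The end vertex of a list of edges starting at the vertex `v`. -/
def pathEnd (rng : E → V) : V → List E → V
  | v, [] => v
  | _, e :: l => pathEnd rng (rng e) l

theorem pathEnd_append (rng : E → V) (v : V) (l₁ l₂ : List E) :
    pathEnd rng v (l₁ ++ l₂) = pathEnd rng (pathEnd rng v l₁) l₂ := by
  induction l₁ generalizing v with
  | nil => rfl
  | cons e l ih => simpa [pathEnd] using ih (rng e)

theorem isPathFrom_append (src rng : E → V) (v : V) (l₁ l₂ : List E) :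
    IsPathFrom src rng v (l₁ ++ l₂) ↔
      IsPathFrom src rng v l₁ ∧ IsPathFrom src rng (pathEnd rng v l₁) l₂ := by
  induction l₁ generalizing v with
  | nil => simp [IsPathFrom, pathEnd]
  | cons e l ih => simp [IsPathFrom, pathEnd, ih (rng e), and_assoc]

/-- A (directed) path in the graph `(V, E, src, rng)`: a starting vertex together
with a composable list of edges (a path of length zero is just a vertex). -/
structure GPath (src rng : E → V) where
  start : V
  edges : List E
  isPath : IsPathFrom src rng start edges

/-- The range (end vertex) of a path. -/
def GPath.range {src rng : E → V} (p : GPath src rng) : V :=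
  pathEnd rng p.start p.edges

/-- The nonzero elements of the graph inverse semigroup: pairs `u v⁻¹` of paths
with `r u = r v`. -/
def GISElem (src rng : E → V) : Type _ :=
  {p : GPath src rng × GPath src rng // p.1.range = p.2.range}

/-- The graph inverse semigroup over the graph `(V, E, src, rng)`: the nonzero
elements `u v⁻¹` together with a zero element (represented by `none`). -/
def GIS (src rng : E → V) : Type _ := Option (GISElem src rng)

instance {src rng : E → V} : Zero (GIS src rng) :=
  ⟨(none : Option (GISElem src rng))⟩

open Classical in
/-- The multiplication of a graph inverse semigroup:
`u₁v₁⁻¹ · u₂v₂⁻¹ = u₁w v₂⁻¹` if `u₂ = v₁ w`, `u₁v₁⁻¹ · u₂v₂⁻¹ = u₁ (v₂ w)⁻¹` if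
`v₁ = u₂ w`, and `0` otherwise; `0` is absorbing. -/
noncomputable def GIS.mul {src rng : E → V} :
    Option (GISElem src rng) → Option (GISElem src rng) → Option (GISElem src rng)
  | some ⟨(u₁, v₁), h₁⟩, some ⟨(u₂, v₂), h₂⟩ =>
    if h : v₁.start = u₂.start ∧ v₁.edges <+: u₂.edges then
      some ⟨(⟨u₁.start, u₁.edges ++ u₂.edges.drop v₁.edges.length, by
        obtain ⟨hs, t, ht⟩ := h
        have hdrop : u₂.edges.drop v₁.edges.length = t := by
          rw [← ht, List.drop_left]
        have hu₂ := u₂.isPath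
        rw [← ht, isPathFrom_append] at hu₂
        rw [hdrop, isPathFrom_append]
        refine ⟨u₁.isPath, ?_⟩
        have he : pathEnd rng u₁.start u₁.edges = pathEnd rng u₂.start v₁.edges := by
          rw [← hs]; exact h₁
        rw [he]; exact hu₂.2⟩, v₂), by
        show pathEnd rng u₁.start (u₁.edges ++ u₂.edges.drop v₁.edges.length) = v₂.range
        obtain ⟨hs, t, ht⟩ := h
        have hdrop : u₂.edges.drop v₁.edges.length = t := by
          rw [← ht, List.drop_left]
        rw [hdrop, pathEnd_append]
        have he : pathEnd rng u₁.start u₁.edges = pathEnd rng u₂.start v₁.edges := by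
          rw [← hs]; exact h₁
        rw [he, ← pathEnd_append, ht]
        exact h₂⟩
    else if h' : u₂.start = v₁.start ∧ u₂.edges <+: v₁.edges then
      some ⟨(u₁, ⟨v₂.start, v₂.edges ++ v₁.edges.drop u₂.edges.length, by
        obtain ⟨hs, t, ht⟩ := h'
        have hdrop : v₁.edges.drop u₂.edges.length = t := by
          rw [← ht, List.drop_left]
        have hv₁ := v₁.isPath
        rw [← ht, isPathFrom_append] at hv₁
        rw [hdrop, isPathFrom_append]
        refine ⟨v₂.isPath, ?_⟩
        have he : pathEnd rng v₂.start v₂.edges = pathEnd rng v₁.start u₂.edges := by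
          rw [← hs]; exact h₂.symm
        rw [he]; exact hv₁.2⟩), by
        show u₁.range = pathEnd rng v₂.start (v₂.edges ++ v₁.edges.drop u₂.edges.length)
        obtain ⟨hs, t, ht⟩ := h'
        have hdrop : v₁.edges.drop u₂.edges.length = t := by
          rw [← ht, List.drop_left]
        have he : pathEnd rng v₂.start v₂.edges = pathEnd rng v₁.start u₂.edges := by
          rw [← hs]; exact h₂.symm
        rw [hdrop, pathEnd_append, he, ← pathEnd_append, ht]
        exact h₁⟩
    else none
  | _, _ => none

noncomputable instance {src rng : E → V} : Mul (GIS src rng) := ⟨GIS.mul⟩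

theorem GIS.zero_mul {src rng : E → V} (x : GIS src rng) : 0 * x = 0 := rfl

/-- The topology in which every nonzero point is isolated and the open
neighbourhoods of `0` are exactly the cofinite sets containing `0`. -/
def tauC (α : Type*) [Zero α] : TopologicalSpace α where
  IsOpen U := (0 : α) ∈ U → Uᶜ.Finite
  isOpen_univ := by simp
  isOpen_inter U W hU hW h := by
    rw [Set.compl_inter]
    exact (hU h.1).union (hW h.2)
  isOpen_sUnion 𝒮 h h0 := by
    obtain ⟨U, hU, hU0⟩ := h0
    exact (h U hU hU0).subset (Set.compl_subset_compl.mpr (Set.subset_sUnion_of_mem hU))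

/-- A topological space is CLP-compact if every cover by clopen sets has a
finite subcover. -/
def CLPCompact (X : Type*) [TopologicalSpace X] : Prop :=
  ∀ 𝒰 : Set (Set X), (∀ U ∈ 𝒰, IsClopen U) → ⋃₀ 𝒰 = Set.univ →
    ∃ ℱ ⊆ 𝒰, ℱ.Finite ∧ ⋃₀ ℱ = Set.univ

/-- A topological space is countably compact if every infinite subset has an
accumulation point. -/
def CountablyCompactSpace (X : Type*) [TopologicalSpace X] : Prop :=
  ∀ B : Set X, B.Infinite → ∃ x : X, AccPt x (Filter.principal B)

/-- A topological space is feebly compact if every locally finite family of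
nonempty open sets is finite. -/
def FeeblyCompact (X : Type*) [TopologicalSpace X] : Prop :=
  ∀ 𝒰 : Set (Set X), (∀ U ∈ 𝒰, IsOpen U ∧ U.Nonempty) →
    (∀ x : X, ∃ N ∈ nhds x, {U ∈ 𝒰 | (U ∩ N).Nonempty}.Finite) → 𝒰.Finite

/-- The multiplication of the bicyclic monoid on `ℕ × ℕ`. -/
def bicyclicMul (x y : ℕ × ℕ) : ℕ × ℕ :=
  (x.1 + y.1 - min x.2 y.1, x.2 + y.2 - min x.2 y.1)

/-- The multiplication of the semigroup of `X × X`-matrix units (with zero `none`). -/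
def matUnitsMul {X : Type*} [DecidableEq X] :
    Option (X × X) → Option (X × X) → Option (X × X)
  | some (a, b), some (c, d) => if b = c then some (a, d) else none
  | _, _ => none

/-- A cycle based at the vertex `e`: a path of nonzero length from `e` to `e`. -/
def HasCycleAt (src rng : E → V) (e : V) : Prop :=
  ∃ p : GPath src rng, p.edges ≠ [] ∧ p.start = e ∧ p.range = e

end GISPaper

namespace GISPaper

variable {V E : Type*} {src rng : E → V}

theorem GPath.ext' {p q : GPath src rng} (hs : p.start = q.start)
    (he : p.edges = q.edges) : p = q := by
  cases p; cases q; cases hs; cases he; rfl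

theorem diag_form {z : GISElem src rng} (h : z.1.1 = z.1.2) :
    z = ⟨(z.1.1, z.1.1), rfl⟩ := by
  obtain ⟨⟨p, q⟩, hr⟩ := z
  cases h
  rfl

theorem isPathFrom_take {v : V} {l : List E} (h : IsPathFrom src rng v l) (n : ℕ) :
    IsPathFrom src rng v (l.take n) := by
  rw [← List.take_append_drop n l, isPathFrom_append] at h
  exact h.1

theorem eq_diag_of_idem {z : GISElem src rng}
    (h : GIS.mul (some z) (some z) = some z) : z.1.1 = z.1.2 := by
  obtain ⟨⟨p, q⟩, hr⟩ := z
  rw [GIS.mul] at h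
  split_ifs at h with h1 h2
  · have he := congrArg (fun o : Option (GISElem src rng) =>
      o.elim ([] : List E) (fun w => w.val.1.edges)) h
    simp only [Option.elim] at he
    have hlen := congrArg List.length he
    simp only [List.length_append, List.length_drop] at hlen
    have hle : p.edges.length ≤ q.edges.length := by omega
    have hedges : q.edges = p.edges := h1.2.eq_of_length_le hle
    exact GPath.ext' h1.1.symm hedges.symm
  · have he := congrArg (fun o : Option (GISElem src rng) =>
      o.elim ([] : List E) (fun w => w.val.2.edges)) h
    simp only [Option.elim] at he
    have hlen := congrArg List.length he
    simp only [List.length_append, List.length_drop] at hlen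
    have hle : q.edges.length ≤ p.edges.length := by omega
    have hedges : p.edges = q.edges := h2.2.eq_of_length_le hle
    exact GPath.ext' h2.1 hedges

theorem some_diag_congr {p q : GPath src rng} (h : p = q) :
    (some ⟨(p, p), rfl⟩ : GIS src rng) = some ⟨(q, q), rfl⟩ := by
  cases h; rfl

theorem cmp_of_mul_ne_zero {p q : GPath src rng} {hp : p.range = p.range}
    {hq : q.range = q.range}
    (h : GIS.mul (some ⟨(p, p), hp⟩) (some ⟨(q, q), hq⟩) ≠ none) :
    p.start = q.start ∧ (p.edges <+: q.edges ∨ q.edges <+: p.edges) := by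
  rw [GIS.mul] at h
  split_ifs at h with h1 h2
  · exact ⟨h1.1, Or.inl h1.2⟩
  · exact ⟨h2.1.symm, Or.inr h2.2⟩
  · exact absurd rfl h

theorem take_eq_take_of_prefix {l₁ l₂ : List E} (h : l₁ <+: l₂) {n : ℕ}
    (hn : n ≤ l₁.length) : l₁.take n = l₂.take n := by
  conv_lhs => rw [List.prefix_iff_eq_take.mp h]
  rw [List.take_take, min_eq_left hn]

end GISPaper

open GISPaper in
/-- Let `E` be an acyclic graph and `C` an infinite chain in the
idempotents of `G(E)` with respect to the natural partial order (`e ≤ f` iff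
`e = ef = fe`). Then there is a sequence of paths `(u_n)` such that `u 0` is a
vertex, each `u (n+1)` extends `u n` by one edge, and
`C ⊆ {u_n u_n⁻¹ : n ∈ ω} ∪ {0}`. -/
theorem statement12 {V E : Type*} (src rng : E → V)
    (hacyc : ∀ p : GPath src rng, p.edges ≠ [] → p.start ≠ p.range)
    (C : Set (GIS src rng))
    (hCidem : ∀ x ∈ C, x * x = x)
    (hchain : ∀ x ∈ C, ∀ y ∈ C, (x = x * y ∧ x = y * x) ∨ (y = y * x ∧ y = x * y))
    (hinf : C.Infinite) :
    ∃ u : ℕ → GPath src rng, (u 0).edges = [] ∧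
      (∀ n : ℕ, ∃ x : E,
        (u (n + 1)).start = (u n).start ∧ (u (n + 1)).edges = (u n).edges ++ [x]) ∧
      C ⊆ {g : GIS src rng | ∃ n : ℕ, g = some ⟨(u n, u n), rfl⟩} ∪ {0} := by
  classical
  set S : Set (GPath src rng) := {p | (some ⟨(p, p), rfl⟩ : GIS src rng) ∈ C} with hS
  -- every nonzero element of C is diagonal
  have hC' : ∀ x ∈ C, x ≠ (none : Option (GISElem src rng)) →
      ∃ p ∈ S, x = some ⟨(p, p), rfl⟩ := by
    intro x hx hx0
    obtain ⟨z, rfl⟩ := Option.ne_none_iff_exists'.mp hx0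
    have hidem : GIS.mul (some z) (some z) = some z := hCidem _ hx
    have hdiag := diag_form (eq_diag_of_idem hidem)
    exact ⟨z.1.1, by rw [hS, Set.mem_setOf_eq, ← hdiag]; exact hx, by rw [← hdiag]⟩
  -- comparability of elements of S
  have hcomp : ∀ p ∈ S, ∀ q ∈ S,
      p.start = q.start ∧ (p.edges <+: q.edges ∨ q.edges <+: p.edges) := by
    intro p hp q hq
    have := hchain _ hp _ hq
    rcases this with ⟨h1, -⟩ | ⟨h1, -⟩
    · exact cmp_of_mul_ne_zero (fun hc => Option.some_ne_none _ (h1.trans hc))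
    · have h2 := cmp_of_mul_ne_zero (p := q) (q := p) (hp := rfl) (hq := rfl)
        (fun hc => Option.some_ne_none _ (h1.trans hc))
      exact ⟨h2.1.symm, h2.2.symm⟩
  -- equal lengths imply equality on S
  have hlen : ∀ p ∈ S, ∀ q ∈ S, p.edges.length = q.edges.length → p = q := by
    intro p hp q hq hl
    obtain ⟨hs, hpre | hpre⟩ := hcomp p hp q hq
    · exact GPath.ext' hs (hpre.eq_of_length hl)
    · exact GPath.ext' hs (hpre.eq_of_length_le hl.le).symm
  -- S is infinite
  have hSinf : S.Infinite := by
    intro hfin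
    apply hinf
    have : C ⊆ (fun p : GPath src rng => (some ⟨(p, p), rfl⟩ : GIS src rng)) '' S ∪ {none} := by
      intro x hx
      by_cases hx0 : x = (none : Option (GISElem src rng))
      · exact Or.inr hx0
      · obtain ⟨p, hp, rfl⟩ := hC' x hx hx0
        exact Or.inl ⟨p, hp, rfl⟩
    exact Set.Finite.subset ((hfin.image _).union (Set.finite_singleton _)) this
  -- lengths are unbounded
  have hub : ∀ n : ℕ, ∃ p, p ∈ S ∧ n ≤ p.edges.length := by
    intro n
    by_contra hcon
    push_neg at hcon
    apply hSinf
    have hinj : Set.InjOn (fun p : GPath src rng => p.edges.length) S := by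
      intro p hp q hq h
      exact hlen p hp q hq h
    have himg : ((fun p : GPath src rng => p.edges.length) '' S).Finite := by
      apply Set.Finite.subset (Set.finite_Iio n)
      rintro _ ⟨p, hp, rfl⟩
      exact hcon p hp
    exact Set.Finite.of_finite_image himg hinj
  choose f hfS hfl using hub
  -- coherence of prefixes
  have htake : ∀ p ∈ S, ∀ q ∈ S, ∀ n : ℕ, n ≤ p.edges.length → n ≤ q.edges.length →
      p.edges.take n = q.edges.take n := by
    intro p hp q hq n hnp hnq
    obtain ⟨-, hpre | hpre⟩ := hcomp p hp q hq
    · exact take_eq_take_of_prefix hpre hnp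
    · exact (take_eq_take_of_prefix hpre hnq).symm
  refine ⟨fun n => ⟨(f n).start, (f n).edges.take n, isPathFrom_take (f n).isPath n⟩,
    rfl, ?_, ?_⟩
  · intro n
    have hn1 : n + 1 ≤ (f (n + 1)).edges.length := hfl (n + 1)
    have hlt : n < (f (n + 1)).edges.length := hn1
    refine ⟨(f (n + 1)).edges[n], (hcomp _ (hfS (n + 1)) _ (hfS n)).1, ?_⟩
    show (f (n + 1)).edges.take (n + 1) = (f n).edges.take n ++ [(f (n + 1)).edges[n]]
    rw [List.take_succ, List.getElem?_eq_getElem hlt,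
      htake _ (hfS (n + 1)) _ (hfS n) n (by omega) (hfl n)]
    rfl
  · intro x hx
    by_cases hx0 : x = (none : Option (GISElem src rng))
    · exact Or.inr hx0
    · obtain ⟨p, hp, hxp⟩ := hC' x hx hx0
      left
      refine ⟨p.edges.length, ?_⟩
      have hup : (⟨(f p.edges.length).start, (f p.edges.length).edges.take p.edges.length,
          isPathFrom_take (f p.edges.length).isPath p.edges.length⟩ : GPath src rng) = p := by
        apply GPath.ext'
        · exact (hcomp _ (hfS _) _ hp).1
        · show (f p.edges.length).edges.take p.edges.length = p.edges
          rw [htake _ (hfS _) _ hp p.edges.length (hfl _) le_rfl, List.take_length]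
      exact hxp.trans (some_diag_congr hup.symm)
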